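/- For n ≥ 2, the difference between the win rate of the optimal policy at KL level d_n = log n − (n−1)/n and the best-of-n win rate n/(n+1) is maximized over n at n = 2 and is less than 0.01; in particular, for n = 2 with c solving ((c−1)e^c+1)/(e^c−1) − log((e^c−1)/c) = log 2 − 1/2, one has ((c−1)e^c+1)/(c(e^c−1)) − 2/3 < 1/100. -/

import Mathlib

open Real

noncomputable def auxF (c : ℝ) : ℝ :=
  c - 1 + c * (Real.exp c - 1)⁻¹ - Real.log (Real.exp c - 1) + Real.log c

noncomputable def auxG (c : ℝ) : ℝ := 1 - c⁻¹ + (Real.exp c - 1)⁻¹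

lemma exp_sub_one_pos' {c : ℝ} (hc : 0 < c) : 0 < Real.exp c - 1 := by
  have : Real.exp 0 < Real.exp c := Real.exp_lt_exp.mpr hc
  simpa using this

lemma key1 {c : ℝ} (hc : 0 < c) : c * Real.exp (c / 2) < Real.exp c - 1 := by
  have h := Real.self_lt_sinh_iff.mpr (half_pos hc)
  rw [Real.sinh_eq] at h
  have e1 : Real.exp (c / 2) * Real.exp (c / 2) = Real.exp c := by
    rw [← Real.exp_add]; ring_nf
  have e2 : Real.exp (-(c / 2)) * Real.exp (c / 2) = 1 := by
    rw [← Real.exp_add]; simp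
  nlinarith [Real.exp_pos (c / 2)]

lemma key2 {c : ℝ} (hc : 0 < c) : c ^ 2 * Real.exp c < (Real.exp c - 1) ^ 2 := by
  have h := key1 hc
  have e1 : Real.exp (c / 2) * Real.exp (c / 2) = Real.exp c := by
    rw [← Real.exp_add]; ring_nf
  nlinarith [Real.exp_pos (c / 2), mul_pos hc (Real.exp_pos (c / 2)), exp_sub_one_pos' hc]

lemma auxG_hasDeriv {c : ℝ} (hc : 0 < c) :
    HasDerivAt auxG (c⁻¹ ^ 2 - Real.exp c * (Real.exp c - 1)⁻¹ ^ 2) c := by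
  have hne : Real.exp c - 1 ≠ 0 := ne_of_gt (exp_sub_one_pos' hc)
  have h1 : HasDerivAt (fun x : ℝ => x⁻¹) (-1 / c ^ 2) c := by
    simpa [Pi.inv_def] using (hasDerivAt_id c).inv (ne_of_gt hc)
  have h2 : HasDerivAt (fun x : ℝ => (Real.exp x - 1)⁻¹)
      (-Real.exp c / (Real.exp c - 1) ^ 2) c := by
    simpa [Pi.inv_def] using ((Real.hasDerivAt_exp c).sub_const 1).inv hne
  have h := ((hasDerivAt_const c (1 : ℝ)).sub h1).add h2
  refine h.congr_deriv ?_
  field_simp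
  ring

lemma auxF_hasDeriv {c : ℝ} (hc : 0 < c) :
    HasDerivAt auxF
      (1 + ((Real.exp c - 1)⁻¹ + c * (-Real.exp c / (Real.exp c - 1) ^ 2))
        - Real.exp c / (Real.exp c - 1) + c⁻¹) c := by
  have hne : Real.exp c - 1 ≠ 0 := ne_of_gt (exp_sub_one_pos' hc)
  have h1 : HasDerivAt (fun x : ℝ => x - 1) 1 c := by
    simpa using (hasDerivAt_id c).sub_const 1
  have h2 : HasDerivAt (fun x : ℝ => x * (Real.exp x - 1)⁻¹)
      ((Real.exp c - 1)⁻¹ + c * (-Real.exp c / (Real.exp c - 1) ^ 2)) c := by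
    have := (hasDerivAt_id c).mul (((Real.hasDerivAt_exp c).sub_const 1).inv hne)
    simpa [Pi.inv_def, Pi.mul_def] using this
  have h3 : HasDerivAt (fun x : ℝ => Real.log (Real.exp x - 1))
      (Real.exp c / (Real.exp c - 1)) c :=
    ((Real.hasDerivAt_exp c).sub_const 1).log hne
  have h4 : HasDerivAt Real.log c⁻¹ c := Real.hasDerivAt_log (ne_of_gt hc)
  exact ((h1.add h2).sub h3).add h4

lemma auxG_deriv_pos {c : ℝ} (hc : 0 < c) :
    0 < c⁻¹ ^ 2 - Real.exp c * (Real.exp c - 1)⁻¹ ^ 2 := by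
  have h2 := key2 hc
  have he := exp_sub_one_pos' hc
  have : Real.exp c * (Real.exp c - 1)⁻¹ ^ 2 < c⁻¹ ^ 2 := by
    rw [inv_pow, inv_pow, ← div_eq_mul_inv, ← one_div,
      div_lt_div_iff₀ (by positivity) (by positivity)]
    nlinarith
  linarith

lemma auxF_deriv_pos {c : ℝ} (hc : 0 < c) :
    0 < 1 + ((Real.exp c - 1)⁻¹ + c * (-Real.exp c / (Real.exp c - 1) ^ 2))
        - Real.exp c / (Real.exp c - 1) + c⁻¹ := by
  have h2 := key2 hc
  have he := exp_sub_one_pos' hc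
  have hEq : 1 + ((Real.exp c - 1)⁻¹ + c * (-Real.exp c / (Real.exp c - 1) ^ 2))
        - Real.exp c / (Real.exp c - 1) + c⁻¹
      = c * (c⁻¹ ^ 2 - Real.exp c * (Real.exp c - 1)⁻¹ ^ 2) := by
    field_simp
    ring
  rw [hEq]
  exact mul_pos hc (auxG_deriv_pos hc)

lemma auxF_strictMono : StrictMonoOn auxF (Set.Ioi 0) := by
  refine strictMonoOn_of_deriv_pos (convex_Ioi 0) ?_ ?_
  · exact fun x hx => (auxF_hasDeriv hx).continuousAt.continuousWithinAt
  · intro x hx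
    rw [interior_Ioi] at hx
    rw [(auxF_hasDeriv hx).deriv]
    exact auxF_deriv_pos hx

lemma auxG_strictMono : StrictMonoOn auxG (Set.Ioi 0) := by
  refine strictMonoOn_of_deriv_pos (convex_Ioi 0) ?_ ?_
  · exact fun x hx => (auxG_hasDeriv hx).continuousAt.continuousWithinAt
  · intro x hx
    rw [interior_Ioi] at hx
    rw [(auxG_hasDeriv hx).deriv]
    exact auxG_deriv_pos hx

lemma auxF_eq {c : ℝ} (hc : 0 < c) :
    ((c - 1) * Real.exp c + 1) / (Real.exp c - 1) - Real.log ((Real.exp c - 1) / c)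
      = auxF c := by
  have he := exp_sub_one_pos' hc
  rw [Real.log_div (ne_of_gt he) (ne_of_gt hc)]
  unfold auxF
  field_simp
  ring

lemma auxG_eq {c : ℝ} (hc : 0 < c) :
    ((c - 1) * Real.exp c + 1) / (c * (Real.exp c - 1)) = auxG c := by
  have he := exp_sub_one_pos' hc
  unfold auxG
  field_simp
  ring

lemma auxF_gt {c : ℝ} (hc : 0 < c) : Real.log c - 1 < auxF c := by
  have he := exp_sub_one_pos' hc
  have h1 : Real.log (Real.exp c - 1) < c := by
    have := Real.log_lt_log he (by linarith : Real.exp c - 1 < Real.exp c)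
    rwa [Real.log_exp] at this
  have h2 : 0 < c * (Real.exp c - 1)⁻¹ := by positivity
  unfold auxF
  linarith

lemma exp_div_gt (a b : ℕ) (hb : 0 < b) {r : ℝ} (hr : 0 < r)
    (h : r ^ b < (2.7182818283 : ℝ) ^ a) : r < Real.exp ((a : ℝ) / (b : ℝ)) := by
  have hb' : (0 : ℝ) < b := by exact_mod_cast hb
  have key : Real.exp ((a : ℝ) / b) ^ b = Real.exp a := by
    rw [← Real.exp_nat_mul]
    congr 1
    field_simp
  have h2 : Real.exp (a : ℝ) = Real.exp 1 ^ a := by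
    rw [← Real.exp_nat_mul]; norm_num
  have h3 : (2.7182818283 : ℝ) ^ a ≤ Real.exp 1 ^ a :=
    pow_le_pow_left₀ (by norm_num) (le_of_lt Real.exp_one_gt_d9) a
  have : r ^ b < Real.exp ((a : ℝ) / b) ^ b := by
    rw [key, h2]; linarith
  exact lt_of_pow_lt_pow_left₀ b (le_of_lt (Real.exp_pos _)) this

lemma exp_div_lt (a b : ℕ) (hb : 0 < b) {r : ℝ} (hr : 0 ≤ r)
    (h : (2.7182818286 : ℝ) ^ a < r ^ b) : Real.exp ((a : ℝ) / (b : ℝ)) < r := by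
  have hb' : (0 : ℝ) < b := by exact_mod_cast hb
  have key : Real.exp ((a : ℝ) / b) ^ b = Real.exp a := by
    rw [← Real.exp_nat_mul]
    congr 1
    field_simp
  have h2 : Real.exp (a : ℝ) = Real.exp 1 ^ a := by
    rw [← Real.exp_nat_mul]; norm_num
  have h3 : Real.exp 1 ^ a ≤ (2.7182818286 : ℝ) ^ a :=
    pow_le_pow_left₀ (le_of_lt (Real.exp_pos 1)) (le_of_lt Real.exp_one_lt_d9) a
  have : Real.exp ((a : ℝ) / b) ^ b < r ^ b := by
    rw [key, h2]; linarith
  exact lt_of_pow_lt_pow_left₀ b hr this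
lemma ngt0 : (48883/5000 : ℝ) < Real.exp (57/25) := by
  have h := exp_div_gt 57 25 (by norm_num) (r := (48883/5000 : ℝ)) (by norm_num) (by norm_num)
  norm_num at h
  exact h

lemma ngt1 : (49523/5000 : ℝ) < Real.exp (2293/1000) := by
  have h := exp_div_gt 2293 1000 (by norm_num) (r := (49523/5000 : ℝ)) (by norm_num) (by rw [show (2293:ℕ) = 250*9+43 from rfl, show (1000:ℕ) = 250*4+0 from rfl, pow_add, pow_add, pow_mul, pow_mul]; norm_num)
  norm_num at h
  exact h

lemma ngt2 : (89047/22930 : ℝ) < Real.exp (1357/1000) := by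
  have h := exp_div_gt 1357 1000 (by norm_num) (r := (89047/22930 : ℝ)) (by norm_num) (by rw [show (1357:ℕ) = 250*5+107 from rfl, show (1000:ℕ) = 250*4+0 from rfl, pow_add, pow_add, pow_mul, pow_mul]; norm_num)
  norm_num at h
  exact h

lemma ngt3 : (420979/10000 : ℝ) < Real.exp (187/50) := by
  have h := exp_div_gt 187 50 (by norm_num) (r := (420979/10000 : ℝ)) (by norm_num) (by norm_num)
  norm_num at h
  exact h

lemma ngt4 : (20549/1870 : ℝ) < Real.exp (2397/1000) := by
  have h := exp_div_gt 2397 1000 (by norm_num) (r := (20549/1870 : ℝ)) (by norm_num) (by rw [show (2397:ℕ) = 250*9+147 from rfl, show (1000:ℕ) = 250*4+0 from rfl, pow_add, pow_add, pow_mul, pow_mul]; norm_num)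
  norm_num at h
  exact h

lemma ngt5 : (3 : ℝ) < Real.exp (1651/1500) := by
  have h := exp_div_gt 1651 1500 (by norm_num) (r := (3 : ℝ)) (by norm_num) (by rw [show (1651:ℕ) = 250*6+151 from rfl, show (1500:ℕ) = 250*6+0 from rfl, pow_add, pow_add, pow_mul, pow_mul]; norm_num)
  norm_num at h
  exact h

lemma ngt6 : (1411749/10000 : ℝ) < Real.exp (99/20) := by
  have h := exp_div_gt 99 20 (by norm_num) (r := (1411749/10000 : ℝ)) (by norm_num) (by norm_num)
  norm_num at h
  exact h

lemma ngt7 : (623/22 : ℝ) < Real.exp (418/125) := by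
  have h := exp_div_gt 418 125 (by norm_num) (r := (623/22 : ℝ)) (by norm_num) (by rw [show (418:ℕ) = 250*1+168 from rfl, show (125:ℕ) = 250*0+125 from rfl, pow_add, pow_add, pow_mul, pow_mul]; norm_num)
  norm_num at h
  exact h

lemma ngt8 : (4 : ℝ) < Real.exp (1391/1000) := by
  have h := exp_div_gt 1391 1000 (by norm_num) (r := (4 : ℝ)) (by norm_num) (by rw [show (1391:ℕ) = 250*5+141 from rfl, show (1000:ℕ) = 250*4+0 from rfl, pow_add, pow_add, pow_mul, pow_mul]; norm_num)
  norm_num at h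
  exact h

lemma ngt9 : (4458577/10000 : ℝ) < Real.exp (61/10) := by
  have h := exp_div_gt 61 10 (by norm_num) (r := (4458577/10000 : ℝ)) (by norm_num) (by norm_num)
  norm_num at h
  exact h

lemma ngt10 : (2224289/30500 : ℝ) < Real.exp (8579/2000) := by
  have h := exp_div_gt 8579 2000 (by norm_num) (r := (2224289/30500 : ℝ)) (by norm_num) (by rw [show (8579:ℕ) = 250*34+79 from rfl, show (2000:ℕ) = 250*8+0 from rfl, pow_add, pow_add, pow_mul, pow_mul]; norm_num)
  norm_num at h
  exact h

lemma ngt11 : (5 : ℝ) < Real.exp (203/125) := by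
  have h := exp_div_gt 203 125 (by norm_num) (r := (5 : ℝ)) (by norm_num) (by norm_num)
  norm_num at h
  exact h

lemma ngt12 : (13394307/10000 : ℝ) < Real.exp (36/5) := by
  have h := exp_div_gt 36 5 (by norm_num) (r := (13394307/10000 : ℝ)) (by norm_num) (by norm_num)
  norm_num at h
  exact h

lemma ngt13 : (1115359/6000 : ℝ) < Real.exp (10451/2000) := by
  have h := exp_div_gt 10451 2000 (by norm_num) (r := (1115359/6000 : ℝ)) (by norm_num) (by rw [show (10451:ℕ) = 250*41+201 from rfl, show (2000:ℕ) = 250*8+0 from rfl, pow_add, pow_add, pow_mul, pow_mul]; norm_num)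
  norm_num at h
  exact h

lemma ngt14 : (6 : ℝ) < Real.exp (10877/6000) := by
  have h := exp_div_gt 10877 6000 (by norm_num) (r := (6 : ℝ)) (by norm_num) (by rw [show (10877:ℕ) = 250*43+127 from rfl, show (6000:ℕ) = 250*24+0 from rfl, pow_add, pow_add, pow_mul, pow_mul]; norm_num)
  norm_num at h
  exact h

lemma nlt0 : Real.exp (57/25) < (97767/10000 : ℝ) := by
  have h := exp_div_lt 57 25 (by norm_num) (r := (97767/10000 : ℝ)) (by norm_num) (by norm_num)
  norm_num at h
  exact h

lemma nlt1 : Real.exp (539/400) < (43883/11400 : ℝ) := by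
  have h := exp_div_lt 539 400 (by norm_num) (r := (43883/11400 : ℝ)) (by norm_num) (by rw [show (539:ℕ) = 250*2+39 from rfl, show (400:ℕ) = 250*1+150 from rfl, pow_add, pow_add, pow_mul, pow_mul]; norm_num)
  norm_num at h
  exact h

lemma nlt2 : Real.exp (2293/1000) < (99047/10000 : ℝ) := by
  have h := exp_div_lt 2293 1000 (by norm_num) (r := (99047/10000 : ℝ)) (by norm_num) (by rw [show (2293:ℕ) = 250*9+43 from rfl, show (1000:ℕ) = 250*4+0 from rfl, pow_add, pow_add, pow_mul, pow_mul]; norm_num)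
  norm_num at h
  exact h

lemma nlt3 : Real.exp (187/50) < (21049/500 : ℝ) := by
  have h := exp_div_lt 187 50 (by norm_num) (r := (21049/500 : ℝ)) (by norm_num) (by norm_num)
  norm_num at h
  exact h

lemma nlt4 : Real.exp (99/20) < (5647/40 : ℝ) := by
  have h := exp_div_lt 99 20 (by norm_num) (r := (5647/40 : ℝ)) (by norm_num) (by norm_num)
  norm_num at h
  exact h

lemma nlt5 : Real.exp (61/10) < (2229289/5000 : ℝ) := by
  have h := exp_div_lt 61 10 (by norm_num) (r := (2229289/5000 : ℝ)) (by norm_num) (by norm_num)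
  norm_num at h
  exact h

lemma nlt6 : Real.exp (36/5) < (3348577/2500 : ℝ) := by
  have h := exp_div_lt 36 5 (by norm_num) (r := (3348577/2500 : ℝ)) (by norm_num) (by norm_num)
  norm_num at h
  exact h

lemma auxF_le_bound {c El q : ℝ} (hc : 0 < c) (hEl : 1 < El) (hE : El < Real.exp c)
    (hq : Real.exp q ≤ (El - 1) / c) : auxF c ≤ c - 1 + c * (El - 1)⁻¹ - q := by
  have he := exp_sub_one_pos' hc
  have hEl1 : 0 < El - 1 := by linarith
  have t1 : c * (Real.exp c - 1)⁻¹ ≤ c * (El - 1)⁻¹ := by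
    apply mul_le_mul_of_nonneg_left _ (le_of_lt hc)
    exact inv_anti₀ hEl1 (by linarith)
  have t2 : Real.log (El - 1) ≤ Real.log (Real.exp c - 1) :=
    Real.log_le_log (by linarith) (by linarith)
  have t3 : q ≤ Real.log (El - 1) - Real.log c := by
    have := Real.log_le_log (Real.exp_pos q) hq
    rwa [Real.log_exp, Real.log_div (ne_of_gt hEl1) (ne_of_gt hc)] at this
  unfold auxF
  linarith

lemma auxF_ge_bound {c Eu q : ℝ} (hc : 0 < c) (hE : Real.exp c < Eu)
    (hq : (Eu - 1) / c ≤ Real.exp q) : c - 1 + c * (Eu - 1)⁻¹ - q ≤ auxF c := by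
  have he := exp_sub_one_pos' hc
  have hEu1 : 0 < Eu - 1 := by linarith
  have t1 : c * (Eu - 1)⁻¹ ≤ c * (Real.exp c - 1)⁻¹ := by
    apply mul_le_mul_of_nonneg_left _ (le_of_lt hc)
    exact inv_anti₀ he (by linarith)
  have t2 : Real.log (Real.exp c - 1) ≤ Real.log (Eu - 1) :=
    Real.log_le_log he (by linarith)
  have t3 : Real.log (Eu - 1) - Real.log c ≤ q := by
    have := Real.log_le_log (by positivity) hq
    rwa [Real.log_exp, Real.log_div (ne_of_gt hEu1) (ne_of_gt hc)] at this
  unfold auxF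
  linarith

lemma auxG_le_bound {c El : ℝ} (hc : 0 < c) (hEl : 1 < El) (hE : El < Real.exp c) :
    auxG c ≤ 1 - c⁻¹ + (El - 1)⁻¹ := by
  have he := exp_sub_one_pos' hc
  have : (Real.exp c - 1)⁻¹ ≤ (El - 1)⁻¹ := inv_anti₀ (by linarith) (by linarith)
  unfold auxG
  linarith

lemma auxG_ge_bound {c Eu : ℝ} (hc : 0 < c) (hE : Real.exp c < Eu) :
    1 - c⁻¹ + (Eu - 1)⁻¹ ≤ auxG c := by
  have he := exp_sub_one_pos' hc
  have : (Eu - 1)⁻¹ ≤ (Real.exp c - 1)⁻¹ := inv_anti₀ he (by linarith)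
  unfold auxG
  linarith

lemma F3 : Real.log 3 + 1/3 - 1 ≤ auxF (187/50) := by
  have h := auxF_ge_bound (c := 187/50) (Eu := 21049/500) (q := 2397/1000)
    (by norm_num) nlt3 (by have := ngt4; norm_num at this ⊢; linarith)
  have hlog : Real.log 3 < 1651/1500 :=
    (Real.log_lt_iff_lt_exp (by norm_num)).mpr (by have := ngt5; norm_num at this ⊢; linarith)
  have : (1651/1500 : ℝ) + 1/3 - 1 ≤ 187/50 - 1 + (187/50) * ((21049:ℝ)/500 - 1)⁻¹ - 2397/1000 := by
    norm_num
  linarith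

lemma G3 : auxG (187/50) ≤ 3/4 + 3/400 := by
  have h := auxG_le_bound (c := 187/50) (El := 420979/10000) (by norm_num) (by norm_num) ngt3
  have : (1 : ℝ) - (187/50 : ℝ)⁻¹ + ((420979:ℝ)/10000 - 1)⁻¹ ≤ 3/4 + 3/400 := by norm_num
  linarith

lemma F4 : Real.log 4 + 1/4 - 1 ≤ auxF (99/20) := by
  have h := auxF_ge_bound (c := 99/20) (Eu := 5647/40) (q := 418/125)
    (by norm_num) nlt4 (by have := ngt7; norm_num at this ⊢; linarith)
  have hlog : Real.log 4 < 1391/1000 :=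
    (Real.log_lt_iff_lt_exp (by norm_num)).mpr (by have := ngt8; norm_num at this ⊢; linarith)
  have : (1391/1000 : ℝ) + 1/4 - 1 ≤ 99/20 - 1 + (99/20) * ((5647:ℝ)/40 - 1)⁻¹ - 418/125 := by
    norm_num
  linarith

lemma G4 : auxG (99/20) ≤ 4/5 + 3/400 := by
  have h := auxG_le_bound (c := 99/20) (El := 1411749/10000) (by norm_num) (by norm_num) ngt6
  have : (1 : ℝ) - (99/20 : ℝ)⁻¹ + ((1411749:ℝ)/10000 - 1)⁻¹ ≤ 4/5 + 3/400 := by norm_num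
  linarith

lemma F5 : Real.log 5 + 1/5 - 1 ≤ auxF (61/10) := by
  have h := auxF_ge_bound (c := 61/10) (Eu := 2229289/5000) (q := 8579/2000)
    (by norm_num) nlt5 (by have := ngt10; norm_num at this ⊢; linarith)
  have hlog : Real.log 5 < 203/125 :=
    (Real.log_lt_iff_lt_exp (by norm_num)).mpr (by have := ngt11; norm_num at this ⊢; linarith)
  have : (203/125 : ℝ) + 1/5 - 1 ≤ 61/10 - 1 + (61/10) * ((2229289:ℝ)/5000 - 1)⁻¹ - 8579/2000 := by
    norm_num
  linarith

lemma G5 : auxG (61/10) ≤ 5/6 + 3/400 := by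
  have h := auxG_le_bound (c := 61/10) (El := 4458577/10000) (by norm_num) (by norm_num) ngt9
  have : (1 : ℝ) - (61/10 : ℝ)⁻¹ + ((4458577:ℝ)/10000 - 1)⁻¹ ≤ 5/6 + 3/400 := by norm_num
  linarith

lemma F6 : Real.log 6 + 1/6 - 1 ≤ auxF (36/5) := by
  have h := auxF_ge_bound (c := 36/5) (Eu := 3348577/2500) (q := 10451/2000)
    (by norm_num) nlt6 (by have := ngt13; norm_num at this ⊢; linarith)
  have hlog : Real.log 6 < 10877/6000 :=
    (Real.log_lt_iff_lt_exp (by norm_num)).mpr (by have := ngt14; norm_num at this ⊢; linarith)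
  have : (10877/6000 : ℝ) + 1/6 - 1 ≤ 36/5 - 1 + (36/5) * ((3348577:ℝ)/2500 - 1)⁻¹ - 10451/2000 := by
    norm_num
  linarith

lemma G6 : auxG (36/5) ≤ 6/7 + 3/400 := by
  have h := auxG_le_bound (c := 36/5) (El := 13394307/10000) (by norm_num) (by norm_num) ngt12
  have : (1 : ℝ) - (36/5 : ℝ)⁻¹ + ((13394307:ℝ)/10000 - 1)⁻¹ ≤ 6/7 + 3/400 := by norm_num
  linarith

lemma Fa2 : auxF (57/25) ≤ Real.log 2 - 1/2 := by
  have h := auxF_le_bound (c := 57/25) (El := 48883/5000) (q := 539/400)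
    (by norm_num) (by norm_num) ngt0 (by have := nlt1; norm_num at this ⊢; linarith)
  have hlog : (0.6931471803 : ℝ) < Real.log 2 := Real.log_two_gt_d9
  have : (57/25 : ℝ) - 1 + (57/25) * ((48883:ℝ)/5000 - 1)⁻¹ - 539/400 ≤
      (0.6931471803 : ℝ) - 1/2 := by norm_num
  linarith

lemma Ga2 : 2/3 + 3/400 ≤ auxG (57/25) := by
  have h := auxG_ge_bound (c := 57/25) (Eu := 97767/10000) (by norm_num) nlt0
  have : (2/3 : ℝ) + 3/400 ≤ 1 - (57/25 : ℝ)⁻¹ + ((97767:ℝ)/10000 - 1)⁻¹ := by norm_num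
  linarith

lemma Fb2 : Real.log 2 - 1/2 ≤ auxF (2293/1000) := by
  have h := auxF_ge_bound (c := 2293/1000) (Eu := 99047/10000) (q := 1357/1000)
    (by norm_num) nlt2 (by have := ngt2; norm_num at this ⊢; linarith)
  have hlog : Real.log 2 < 0.6931471808 := Real.log_two_lt_d9
  have : (0.6931471808 : ℝ) - 1/2 ≤
      (2293/1000 : ℝ) - 1 + (2293/1000) * ((99047:ℝ)/10000 - 1)⁻¹ - 1357/1000 := by norm_num
  linarith

lemma Gb2 : auxG (2293/1000) < 2/3 + 1/100 := by
  have h := auxG_le_bound (c := 2293/1000) (El := 49523/5000) (by norm_num) (by norm_num) ngt1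
  have : (1 : ℝ) - (2293/1000 : ℝ)⁻¹ + ((49523:ℝ)/5000 - 1)⁻¹ < 2/3 + 1/100 := by norm_num
  linarith

lemma le_of_auxF_le {a c : ℝ} (ha : 0 < a) (hc : 0 < c) (h : auxF c ≤ auxF a) : c ≤ a := by
  by_contra h'
  push_neg at h'
  exact absurd h (not_le.mpr (auxF_strictMono (Set.mem_Ioi.mpr ha) (Set.mem_Ioi.mpr hc) h'))

lemma auxG_mono {a c : ℝ} (ha : 0 < a) (hc : 0 < c) (h : c ≤ a) : auxG c ≤ auxG a :=
  (auxG_strictMono.monotoneOn) (Set.mem_Ioi.mpr hc) (Set.mem_Ioi.mpr ha) h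

lemma gap_le_B {n : ℕ} (hn : 3 ≤ n) {c : ℝ} (hc : 0 < c)
    (h : auxF c = Real.log n + 1/(n:ℝ) - 1) :
    auxG c ≤ (n:ℝ)/((n:ℝ)+1) + 3/400 := by
  by_cases h7 : 7 ≤ n
  · -- analytic branch
    set N : ℝ := (n : ℝ) with hN
    have hN7 : (7:ℝ) ≤ N := by rw [hN]; exact_mod_cast h7
    have hN0 : 0 < N := by linarith
    set t : ℝ := N * Real.exp (1/N) with ht
    have htpos : 0 < t := by positivity
    have hlogt : Real.log t = Real.log N + 1/N := by
      rw [ht, Real.log_mul (ne_of_gt hN0) (ne_of_gt (Real.exp_pos _)), Real.log_exp]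
    have hFt : auxF c < auxF t := by
      have := auxF_gt htpos
      rw [hlogt] at this
      linarith [h]
    have hct : c ≤ t := by
      by_contra h'
      push_neg at h'
      exact absurd hFt (not_lt.mpr (le_of_lt (auxF_strictMono (Set.mem_Ioi.mpr htpos)
        (Set.mem_Ioi.mpr hc) h')))
    have hGc : auxG c ≤ auxG t := auxG_mono htpos hc hct
    -- bound auxG t
    have hinv : (1 - 1/N)/N ≤ t⁻¹ := by
      have h1 : t⁻¹ = Real.exp (-(1/N)) * N⁻¹ := by
        rw [ht, mul_inv, ← Real.exp_neg]; ring
      have h2 : 1 - 1/N ≤ Real.exp (-(1/N)) := by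
        have := Real.add_one_le_exp (-(1/N))
        linarith
      rw [h1, div_eq_mul_inv]
      apply mul_le_mul_of_nonneg_right h2 (by positivity)
    have htN : N ≤ t := by
      have : (1:ℝ) ≤ Real.exp (1/N) := Real.one_le_exp (by positivity)
      nlinarith
    have hexpt : (1046 : ℝ) ≤ Real.exp t := by
      have h1 : Real.exp (7:ℝ) ≤ Real.exp t := Real.exp_le_exp.mpr (by linarith)
      have h2 : Real.exp (7:ℝ) = Real.exp 1 ^ (7:ℕ) := by
        rw [← Real.exp_nat_mul]; norm_num
      have h3 : (2.7:ℝ) ^ (7:ℕ) ≤ Real.exp 1 ^ (7:ℕ) := by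
        apply pow_le_pow_left₀ (by norm_num)
        linarith [Real.exp_one_gt_d9]
      have h4 : (1046 : ℝ) ≤ (2.7:ℝ) ^ (7:ℕ) := by norm_num
      linarith
    have hinv2 : (Real.exp t - 1)⁻¹ ≤ (1045 : ℝ)⁻¹ :=
      inv_anti₀ (by norm_num) (by linarith)
    have hGt : auxG t ≤ 1 - (1 - 1/N)/N + (1045:ℝ)⁻¹ := by
      unfold auxG
      linarith
    -- final arithmetic
    have key : (1 - 1/N)/N = 1/(N+1) - 1/(N^2*(N+1)) := by
      field_simp
      ring
    have h392 : (392:ℝ) ≤ N^2*(N+1) := by nlinarith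
    have hsm : 1/(N^2*(N+1)) ≤ 1/392 := by
      apply one_div_le_one_div_of_le (by norm_num) h392
    have hfin : 1 - N/(N+1) = 1/(N+1) := by
      field_simp
      ring
    have hpos : (0:ℝ) ≤ 1/(N+1) := by positivity
    have hsum : (1/392 : ℝ) + (1045:ℝ)⁻¹ ≤ 3/400 := by norm_num
    linarith [hGc, hGt, key, hfin, hsm, hpos, hsum]
  · -- n ∈ {3,4,5,6}
    push_neg at h7
    interval_cases n
    · push_cast at h ⊢
      have hle : auxF c ≤ auxF (187/50) := by rw [h]; exact F3
      have := auxG_mono (by norm_num) hc (le_of_auxF_le (by norm_num) hc hle)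
      have := G3
      norm_num
      linarith
    · push_cast at h ⊢
      have hle : auxF c ≤ auxF (99/20) := by rw [h]; exact F4
      have := auxG_mono (by norm_num) hc (le_of_auxF_le (by norm_num) hc hle)
      have := G4
      norm_num
      linarith
    · push_cast at h ⊢
      have hle : auxF c ≤ auxF (61/10) := by rw [h]; exact F5
      have := auxG_mono (by norm_num) hc (le_of_auxF_le (by norm_num) hc hle)
      have := G5
      norm_num
      linarith
    · push_cast at h ⊢
      have hle : auxF c ≤ auxF (36/5) := by rw [h]; exact F6
      have := auxG_mono (by norm_num) hc (le_of_auxF_le (by norm_num) hc hle)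
      have := G6
      norm_num
      linarith

lemma conv1 (n : ℕ) (hn : 2 ≤ n) (c : ℝ) (hc : 0 < c)
    (h : ((c - 1) * Real.exp c + 1) / (Real.exp c - 1) - Real.log ((Real.exp c - 1) / c)
      = Real.log n - ((n : ℝ) - 1) / n) : auxF c = Real.log n + 1/(n:ℝ) - 1 := by
  rw [auxF_eq hc] at h
  have hn0 : (n:ℝ) ≠ 0 := Nat.cast_ne_zero.mpr (by omega)
  have hr : ((n:ℝ) - 1)/n = 1 - 1/n := by field_simp
  rw [h, hr]
  ring

lemma part2gap {c : ℝ} (hc : 0 < c) (hF2 : auxF c = Real.log 2 - 1/2) :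
    2/3 + 3/400 ≤ auxG c := by
  have hle : auxF (57/25) ≤ auxF c := by rw [hF2]; exact Fa2
  have hac : (57/25:ℝ) ≤ c := by
    by_contra h'
    push_neg at h'
    exact absurd hle (not_le.mpr (auxF_strictMono (Set.mem_Ioi.mpr hc) (by norm_num) h'))
  have hG2 : auxG (57/25) ≤ auxG c := auxG_mono hc (by norm_num) hac
  linarith [Ga2]

lemma part3gap {c : ℝ} (hc : 0 < c) (hF2 : auxF c = Real.log 2 - 1/2) :
    auxG c < 2/3 + 1/100 := by
  have hle : auxF c ≤ auxF (2293/1000) := by rw [hF2]; exact Fb2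
  have := auxG_mono (by norm_num) hc (le_of_auxF_le (by norm_num) hc hle)
  linarith [Gb2]

/-- The win-rate gap between the optimal tilted policy at KL level
`d_n = log n − (n−1)/n` and the best-of-`n` policy is below one percentage point for
every `n ≥ 2`, is maximized at `n = 2`, and in particular the `n = 2` gap is `< 1/100`. -/
theorem bon_essentially_optimal :
    (∀ n : ℕ, 2 ≤ n → ∀ c : ℝ, 0 < c →
        ((c - 1) * Real.exp c + 1) / (Real.exp c - 1) - Real.log ((Real.exp c - 1) / c)
            = Real.log n - ((n : ℝ) - 1) / n →
        ((c - 1) * Real.exp c + 1) / (c * (Real.exp c - 1)) - (n : ℝ) / (n + 1)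
          < 1 / 100) ∧
    (∀ n : ℕ, 2 ≤ n → ∀ cn c2 : ℝ, 0 < cn → 0 < c2 →
        ((cn - 1) * Real.exp cn + 1) / (Real.exp cn - 1)
            - Real.log ((Real.exp cn - 1) / cn) = Real.log n - ((n : ℝ) - 1) / n →
        ((c2 - 1) * Real.exp c2 + 1) / (Real.exp c2 - 1)
            - Real.log ((Real.exp c2 - 1) / c2) = Real.log 2 - 1 / 2 →
        ((cn - 1) * Real.exp cn + 1) / (cn * (Real.exp cn - 1)) - (n : ℝ) / (n + 1) ≤
          ((c2 - 1) * Real.exp c2 + 1) / (c2 * (Real.exp c2 - 1)) - 2 / 3) ∧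
    (∀ c : ℝ, 0 < c →
        ((c - 1) * Real.exp c + 1) / (Real.exp c - 1) - Real.log ((Real.exp c - 1) / c)
            = Real.log 2 - 1 / 2 →
        ((c - 1) * Real.exp c + 1) / (c * (Real.exp c - 1)) - 2 / 3 < 1 / 100) := by
  refine ⟨?_, ?_, ?_⟩
  · intro n hn c hc h
    have hF := conv1 n hn c hc h
    rw [auxG_eq hc]
    by_cases h2 : n = 2
    · subst h2
      have hF2 : auxF c = Real.log 2 - 1/2 := by rw [hF]; push_cast; ring
      have := part3gap hc hF2
      push_cast
      linarith
    · have hn3 : 3 ≤ n := by omega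
      have := gap_le_B hn3 hc hF
      linarith
  · intro n hn cn c2 hcn hc2 hn_eq h2_eq
    have hFn := conv1 n hn cn hcn hn_eq
    have hF2 : auxF c2 = Real.log 2 - 1/2 := by
      rw [auxF_eq hc2] at h2_eq
      rw [h2_eq]
    rw [auxG_eq hcn, auxG_eq hc2]
    by_cases h2 : n = 2
    · subst h2
      have hFn2 : auxF cn = Real.log 2 - 1/2 := by rw [hFn]; push_cast; ring
      have hcc : cn = c2 := auxF_strictMono.injOn (Set.mem_Ioi.mpr hcn) (Set.mem_Ioi.mpr hc2)
        (by rw [hFn2, hF2])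
      rw [hcc]
      push_cast
      norm_num
    · have hn3 : 3 ≤ n := by omega
      have hgap := gap_le_B hn3 hcn hFn
      have := part2gap hc2 hF2
      linarith
  · intro c hc h
    have hF2 : auxF c = Real.log 2 - 1/2 := by
      rw [auxF_eq hc] at h
      rw [h]
    rw [auxG_eq hc]
    have := part3gap hc hF2
    linarith
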